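/- arXiv:1605.08674 — 3 statements merged into one kernel-verified Lean document; each statement's English description precedes it below -/
import Mathlib

section
/- If γ > 0 and f is a minimizer of ρ_{C,γ}, then ∫_𝔻 |f(z)|² e^{−2γ|z|²} dA(z) = ∫_𝔻 |f(z)| e^{−γ|z|²} dA(z), and this common value is at most 1. -/
open MeasureTheory Filter Set Metric Polynomial
open scoped ENNReal Topology NNReal

noncomputable section

/-- Normalized area measure on `ℂ`: `dA = (1/π)·(Lebesgue measure)`. -/
def dA : Measure ℂ := (ENNReal.ofReal Real.pi)⁻¹ • volume

/-- The open annulus `𝔸(s,t) = {z : s < |z| < t}`. -/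
def ann (s t : ℝ) : Set ℂ := ball (0:ℂ) t \ closedBall (0:ℂ) s

/-- The Cauchy–Riemann operator `∂̄u = (u_x + i u_y)/2` for complex-valued functions. -/
def dbar (u : ℂ → ℂ) (z : ℂ) : ℂ :=
  (fderiv ℝ u z 1 + Complex.I * fderiv ℝ u z Complex.I) / 2

/-- The Cauchy–Riemann operator `∂̄u = (u_x + i u_y)/2` for real-valued functions. -/
def dbarR (u : ℂ → ℝ) (z : ℂ) : ℂ :=
  (((fderiv ℝ u z 1 : ℝ) : ℂ) + Complex.I * ((fderiv ℝ u z Complex.I : ℝ) : ℂ)) / 2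

/-- The planar discrepancy functional `ρ_{C,γ}(f) = ∫_𝔻 (|f(z)|e^{-γ|z|²} - 1)² dA(z)`. -/
def rhoC (γ : ℝ) (f : ℂ → ℂ) : ℝ≥0∞ :=
  ∫⁻ z in ball (0:ℂ) 1,
    ENNReal.ofReal ((‖f z‖ * Real.exp (-γ * ‖z‖ ^ 2) - 1) ^ 2) ∂dA

/-- The tight planar discrepancy functional
`ρ*_{C,γ}(f) = ∫_ℂ (|f(z)|e^{-γ|z|²} - 1_𝔻(z))² dA(z)`. -/
def rhoCStar (γ : ℝ) (f : ℂ → ℂ) : ℝ≥0∞ :=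
  ∫⁻ z, ENNReal.ofReal ((‖f z‖ * Real.exp (-γ * ‖z‖ ^ 2)
      - (ball (0:ℂ) 1).indicator (fun _ => (1:ℝ)) z) ^ 2) ∂dA

/-- The planar discrepancy density `ρ_C`. -/
def rhoCd : ℝ≥0∞ :=
  liminf (fun γ : ℝ => ⨅ p : Polynomial ℂ, rhoC γ fun z => p.eval z) atTop

/-- The tight planar discrepancy density `ρ_C*`. -/
def rhoCdStar : ℝ≥0∞ :=
  liminf (fun γ : ℝ => ⨅ p : Polynomial ℂ, rhoCStar γ fun z => p.eval z) atTop

/-- The hyperbolic discrepancy functional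
`ρ_{H,r}(f) = (1/log(1/(1-r²))) ∫_{D(0,r)} ((1-|z|²)|f(z)| - 1)² dA(z)/(1-|z|²)`. -/
def rhoH (r : ℝ) (f : ℂ → ℂ) : ℝ≥0∞ :=
  (ENNReal.ofReal (Real.log (1 / (1 - r ^ 2))))⁻¹ *
    ∫⁻ z in ball (0:ℂ) r,
      ENNReal.ofReal (((1 - ‖z‖ ^ 2) * ‖f z‖ - 1) ^ 2
        / (1 - ‖z‖ ^ 2)) ∂dA

/-- The tight hyperbolic discrepancy functional
`ρ*_{H,r}(f) = (1/log(1/(1-r²))) ∫_𝔻 ((1-|z|²)|f(z)| - 1_{D(0,r)}(z))² dA(z)/(1-|z|²)`. -/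
def rhoHStar (r : ℝ) (f : ℂ → ℂ) : ℝ≥0∞ :=
  (ENNReal.ofReal (Real.log (1 / (1 - r ^ 2))))⁻¹ *
    ∫⁻ z in ball (0:ℂ) 1,
      ENNReal.ofReal (((1 - ‖z‖ ^ 2) * ‖f z‖
        - (ball (0:ℂ) r).indicator (fun _ => (1:ℝ)) z) ^ 2
        / (1 - ‖z‖ ^ 2)) ∂dA

/-- The hyperbolic discrepancy density `ρ_H`. -/
def rhoHd : ℝ≥0∞ :=
  liminf (fun r : ℝ => ⨅ p : Polynomial ℂ, rhoH r fun z => p.eval z) (𝓝[<] (1:ℝ))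

/-- The tight hyperbolic discrepancy density `ρ_H*`. -/
def rhoHdStar : ℝ≥0∞ :=
  liminf (fun r : ℝ => ⨅ p : Polynomial ℂ, rhoHStar r fun z => p.eval z) (𝓝[<] (1:ℝ))

/-- `f` is a minimizer of `ρ_{C,γ}` among holomorphic functions on `𝔻`. -/
def IsMinC (γ : ℝ) (f : ℂ → ℂ) : Prop :=
  DifferentiableOn ℂ f (ball 0 1) ∧
    ∀ g : ℂ → ℂ, DifferentiableOn ℂ g (ball 0 1) → rhoC γ f ≤ rhoC γ g

/-- `f` is a minimizer of `ρ_{H,r}` among holomorphic functions on `𝔻`. -/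
def IsMinH (r : ℝ) (f : ℂ → ℂ) : Prop :=
  DifferentiableOn ℂ f (ball 0 1) ∧
    ∀ g : ℂ → ℂ, DifferentiableOn ℂ g (ball 0 1) → rhoH r f ≤ rhoH r g

end

/-! For `t ≥ 0` the function `t f` is again holomorphic, so with `w = |f| e^{-γ|z|²}` the
function `t ↦ ρ_{C,γ}(t f) = ∫_𝔻 (t w - 1)² dA` is minimal at `t = 1`. Comparing with `t = 0`
shows `w ∈ L²(𝔻)`, so this is the quadratic `t² ∫ w² - 2t ∫ w + 1`; Fermat's rule at `t = 1`
gives `∫ w² = ∫ w`, and nonnegativity of its value `1 - ∫ w` at `t = 1` gives the bound. -/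

section QuadraticRescaling

variable {α : Type*} [MeasurableSpace α] {μ : Measure α} [IsFiniteMeasure μ] {h : α → ℝ}

theorem integral_mul_sub_one_sq (hh : MemLp h 2 μ) (t : ℝ) :
    ∫ x, (t * h x - 1) ^ 2 ∂μ
      = t ^ 2 * ∫ x, h x ^ 2 ∂μ - 2 * t * ∫ x, h x ∂μ + μ.real univ := by
  have hsq : Integrable (fun x => h x ^ 2) μ := (memLp_two_iff_integrable_sq hh.1).1 hh
  have hint : Integrable h μ := hh.integrable one_le_two
  calc ∫ x, (t * h x - 1) ^ 2 ∂μ = ∫ x, (t ^ 2 * h x ^ 2 - 2 * t * h x + 1) ∂μ := by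
        congr 1; ext x; ring
    _ = _ := by
      have hlin : Integrable (fun x => t ^ 2 * h x ^ 2 - 2 * t * h x) μ :=
        (hsq.const_mul _).sub (hint.const_mul _)
      rw [integral_add hlin (integrable_const 1),
        integral_sub (hsq.const_mul _) (hint.const_mul _), integral_const_mul,
        integral_const_mul, integral_const, smul_eq_mul, mul_one]

theorem memLp_two_of_lintegral_sub_one_sq_ne_top (hm : AEStronglyMeasurable h μ)
    (hfin : ∫⁻ x, ENNReal.ofReal ((h x - 1) ^ 2) ∂μ ≠ ⊤) : MemLp h 2 μ := by
  have hsq : Integrable (fun x => (h x - 1) ^ 2) μ :=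
    ⟨(hm.sub aestronglyMeasurable_const).pow 2,
      (hasFiniteIntegral_iff_ofReal (ae_of_all _ fun x => sq_nonneg _)).2 hfin.lt_top⟩
  have : MemLp (fun x => h x - 1) 2 μ :=
    (memLp_two_iff_integrable_sq (hm.sub aestronglyMeasurable_const)).2 hsq
  convert this.add (memLp_const 1) using 1
  ext x
  simp

theorem integral_sq_eq_integral_of_isMinOn (hm : AEStronglyMeasurable h μ)
    (hmin : IsMinOn (fun t : ℝ => ∫⁻ x, ENNReal.ofReal ((t * h x - 1) ^ 2) ∂μ) (Ici 0) 1) :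
    MemLp h 2 μ ∧ ∫ x, h x ^ 2 ∂μ = ∫ x, h x ∂μ ∧ ∫ x, h x ∂μ ≤ μ.real univ := by
  have hfin : ∫⁻ x, ENNReal.ofReal ((h x - 1) ^ 2) ∂μ ≠ ⊤ := by
    refine ne_top_of_le_ne_top (measure_ne_top μ univ) ?_
    simpa using hmin (mem_Ici.2 le_rfl : (0 : ℝ) ∈ Ici 0)
  have hh := memLp_two_of_lintegral_sub_one_sq_ne_top hm hfin
  set φ : ℝ → ℝ := fun t => ∫ x, (t * h x - 1) ^ 2 ∂μ
  have hφ_nonneg (t : ℝ) : 0 ≤ φ t := integral_nonneg fun x => sq_nonneg _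
  have hlintegral (t : ℝ) :
      ∫⁻ x, ENNReal.ofReal ((t * h x - 1) ^ 2) ∂μ = ENNReal.ofReal (φ t) :=
    (ofReal_integral_eq_lintegral_ofReal
      ((memLp_two_iff_integrable_sq (by fun_prop)).1 ((hh.const_mul t).sub (memLp_const 1)))
      (ae_of_all _ fun x => sq_nonneg _)).symm
  have hlocal : IsLocalMin φ 1 := by
    filter_upwards [Ioi_mem_nhds one_pos] with t ht
    rw [← ENNReal.ofReal_le_ofReal_iff (hφ_nonneg t), ← hlintegral, ← hlintegral]
    exact hmin (mem_Ici.2 ht.le)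
  set a := ∫ x, h x ^ 2 ∂μ
  set b := ∫ x, h x ∂μ
  have hφ_eq : φ = fun t => t ^ 2 * a - 2 * t * b + μ.real univ :=
    funext (integral_mul_sub_one_sq hh)
  have hderiv : HasDerivAt φ (2 * a - 2 * b) 1 := by
    rw [hφ_eq]
    exact ((((hasDerivAt_pow 2 (1 : ℝ)).mul_const a).fun_sub
      (((hasDerivAt_id' (1 : ℝ)).const_mul 2).mul_const b)).add_const (μ.real univ)).congr_deriv
      (by norm_num)
  have hbound := hφ_nonneg 1
  rw [hφ_eq] at hbound
  have hab := hlocal.hasDerivAt_eq_zero hderiv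
  exact ⟨hh, by linarith, by linarith⟩

theorem lintegral_sq_eq_lintegral_of_isMinOn (hm : AEStronglyMeasurable h μ)
    (h_nonneg : ∀ x, 0 ≤ h x)
    (hmin : IsMinOn (fun t : ℝ => ∫⁻ x, ENNReal.ofReal ((t * h x - 1) ^ 2) ∂μ) (Ici 0) 1) :
    ∫⁻ x, ENNReal.ofReal (h x ^ 2) ∂μ = ∫⁻ x, ENNReal.ofReal (h x) ∂μ ∧
      ∫⁻ x, ENNReal.ofReal (h x) ∂μ ≤ μ univ := by
  obtain ⟨hh, heq, hle⟩ := integral_sq_eq_integral_of_isMinOn hm hmin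
  have hsq : Integrable (fun x => h x ^ 2) μ := (memLp_two_iff_integrable_sq hh.1).1 hh
  rw [← ofReal_integral_eq_lintegral_ofReal hsq (ae_of_all _ fun x => sq_nonneg _),
    ← ofReal_integral_eq_lintegral_ofReal (hh.integrable one_le_two) (ae_of_all _ h_nonneg), heq]
  exact ⟨rfl, ENNReal.ofReal_le_of_le_toReal hle⟩

end QuadraticRescaling

theorem dA_ball_zero_one : dA (ball (0 : ℂ) 1) = 1 := by
  rw [dA, Measure.smul_apply, smul_eq_mul, Complex.volume_ball, ENNReal.ofReal_one, one_pow,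
    one_mul, ← NNReal.coe_real_pi, ENNReal.ofReal_coe_nnreal]
  exact ENNReal.inv_mul_cancel (ENNReal.coe_ne_zero.2 NNReal.pi_ne_zero) ENNReal.coe_ne_top

instance : IsProbabilityMeasure (dA.restrict (ball (0 : ℂ) 1)) :=
  ⟨by rw [Measure.restrict_apply_univ, dA_ball_zero_one]⟩

theorem rhoC_ofReal_mul (γ t : ℝ) (ht : 0 ≤ t) (f : ℂ → ℂ) :
    rhoC γ (fun z => (t : ℂ) * f z)
      = ∫⁻ z in ball (0 : ℂ) 1,
          ENNReal.ofReal ((t * (‖f z‖ * Real.exp (-γ * ‖z‖ ^ 2)) - 1) ^ 2) ∂dA := by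
  simp only [rhoC, norm_mul, Complex.norm_real, Real.norm_of_nonneg ht, mul_assoc]

theorem IsMinC.isMinOn_ofReal_mul {γ : ℝ} {f : ℂ → ℂ} (hf : IsMinC γ f) :
    IsMinOn (fun t : ℝ => ∫⁻ z in ball (0 : ℂ) 1,
      ENNReal.ofReal ((t * (‖f z‖ * Real.exp (-γ * ‖z‖ ^ 2)) - 1) ^ 2) ∂dA) (Ici 0) 1 := by
  refine isMinOn_iff.2 fun t ht => ?_
  rw [← rhoC_ofReal_mul γ 1 zero_le_one, ← rhoC_ofReal_mul γ t ht]
  simpa only [Complex.ofReal_one, one_mul] using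
    hf.2 (fun z => (t : ℂ) * f z) ((differentiableOn_const _).mul hf.1)

theorem planar_variational_identity_general (γ : ℝ) (f : ℂ → ℂ) (hf : IsMinC γ f) :
    (∫⁻ z in ball (0:ℂ) 1, ENNReal.ofReal
        (‖f z‖ ^ 2 * Real.exp (-(2 * γ) * ‖z‖ ^ 2)) ∂dA)
      = (∫⁻ z in ball (0:ℂ) 1, ENNReal.ofReal
        (‖f z‖ * Real.exp (-γ * ‖z‖ ^ 2)) ∂dA) ∧
    (∫⁻ z in ball (0:ℂ) 1, ENNReal.ofReal
        (‖f z‖ * Real.exp (-γ * ‖z‖ ^ 2)) ∂dA) ≤ 1 := by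
  have hcont : ContinuousOn (fun z => ‖f z‖ * Real.exp (-γ * ‖z‖ ^ 2)) (ball 0 1) :=
    hf.1.continuousOn.norm.mul (by fun_prop)
  have hsq (z : ℂ) : ‖f z‖ ^ 2 * Real.exp (-(2 * γ) * ‖z‖ ^ 2)
      = (‖f z‖ * Real.exp (-γ * ‖z‖ ^ 2)) ^ 2 := by
    rw [mul_pow, ← Real.exp_nat_mul]
    ring_nf
  simp_rw [hsq]
  obtain ⟨heq, hle⟩ := lintegral_sq_eq_lintegral_of_isMinOn
    (hcont.aestronglyMeasurable measurableSet_ball) (fun z => by positivity)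
    hf.isMinOn_ofReal_mul
  exact ⟨heq, by rwa [measure_univ] at hle⟩

/-- if `γ > 0` and `f` is a minimizer of `ρ_{C,γ}`, then
`∫_𝔻 |f|² e^{-2γ|z|²} dA = ∫_𝔻 |f| e^{-γ|z|²} dA`, and this common value is at most 1. -/
theorem planar_variational_identity (γ : ℝ) (hγ : 0 < γ) (f : ℂ → ℂ) (hf : IsMinC γ f) :
    (∫⁻ z in ball (0:ℂ) 1, ENNReal.ofReal
        (‖f z‖ ^ 2 * Real.exp (-(2 * γ) * ‖z‖ ^ 2)) ∂dA)
      = (∫⁻ z in ball (0:ℂ) 1, ENNReal.ofReal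
        (‖f z‖ * Real.exp (-γ * ‖z‖ ^ 2)) ∂dA) ∧
    (∫⁻ z in ball (0:ℂ) 1, ENNReal.ofReal
        (‖f z‖ * Real.exp (-γ * ‖z‖ ^ 2)) ∂dA) ≤ 1 :=
  planar_variational_identity_general γ f hf
end

section
/- Planar L²-non-concentration: let (γ_k) be a sequence of positive reals tending to ∞ such that there exist polynomials p_k with ρ_{C,γ_k}(p_k) → ρ_C; let (δ_k) ⊂ (0,1) tend to 0, and for each k let f_k be a minimizer of ρ_{C,γ_k}. Then ∫_{𝔸(1−δ_k,1)} |f_k(z)|² e^{−2γ_k|z|²} dA(z) → 0 as k → ∞. -/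
open MeasureTheory Filter Set Metric Polynomial
open scoped ENNReal Topology NNReal

/-!
A minimizer `f` of `ρ_{C,γ}` does at least as well as the polynomial `p`, so its discrepancy over
`𝔻` is at most `ρ_C + o(1)`. With `s = 1 - δ`, the function `w ↦ f (s w)` is holomorphic across the
closed disk and hence a uniform limit of polynomials there; rescaling `D(0,s)` to `𝔻` therefore
bounds the discrepancy of `f` over `D(0,s)` below by `s² · inf_q ρ_{C,γs²}(q) ≥ ρ_C - o(1)`. Since
`ρ_C ≤ 1` is finite, the discrepancy over the annulus is `o(1)`, and
`|f|² e^{-2γ|z|²} ≤ 2 (|f| e^{-γ|z|²} - 1)² + 2` together with the vanishing area of the annulus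
gives the claim.
-/

theorem tendsto_nhds_zero_of_add_le_of_le_liminf {ι : Type*} {l : Filter ι}
    {a b c : ι → ℝ≥0∞} {L : ℝ≥0∞} (hL : L ≠ ∞) (habc : ∀ᶠ i in l, a i + b i ≤ c i)
    (hc : Tendsto c l (𝓝 L)) (hb : L ≤ liminf b l) : Tendsto a l (𝓝 0) := by
  have hc' : Tendsto (fun i => c i - L) l (𝓝 0) := by
    simpa using ENNReal.Tendsto.sub hc tendsto_const_nhds (Or.inr hL)
  have hb' : Tendsto (fun i => L - b i) l (𝓝 0) := by
    refine tendsto_of_le_liminf_of_limsup_le zero_le ?_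
    rw [ENNReal.limsup_const_sub _ _ hL, tsub_eq_zero_of_le hb]
  refine tendsto_of_tendsto_of_tendsto_of_le_of_le' tendsto_const_nhds (by simpa using hc'.add hb')
    (Eventually.of_forall fun _ => zero_le) ?_
  filter_upwards [habc, hc.eventually_lt_const (lt_top_iff_ne_top.2 hL) |>.mono
    fun i hi => hi.ne] with i hi hci
  have hbi : b i ≠ ∞ := ne_top_of_le_ne_top hci (le_add_self.trans hi)
  refine ENNReal.le_of_add_le_add_right hbi ?_
  calc a i + b i ≤ c i := hi
    _ ≤ (c i - L) + L := le_tsub_add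
    _ ≤ (c i - L) + ((L - b i) + b i) := by gcongr; exact le_tsub_add
    _ = (c i - L) + (L - b i) + b i := (add_assoc _ _ _).symm

theorem dA_ball (a : ℂ) (r : ℝ) : dA (ball a r) = ENNReal.ofReal r ^ 2 := by
  rw [dA, Measure.smul_apply, Complex.volume_ball, smul_eq_mul, ← NNReal.coe_real_pi,
    ENNReal.ofReal_coe_nnreal, mul_left_comm,
    ENNReal.inv_mul_cancel (ENNReal.coe_ne_zero.2 NNReal.pi_pos.ne') ENNReal.coe_ne_top, mul_one]

theorem dA_closedBall (a : ℂ) (r : ℝ) : dA (closedBall a r) = ENNReal.ofReal r ^ 2 := by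
  rw [← dA_ball a r, dA, Measure.smul_apply, Measure.smul_apply, Complex.volume_closedBall,
    Complex.volume_ball]

theorem dA_ann {s t : ℝ} (hs : 0 ≤ s) (hst : s < t) :
    dA (ann s t) = ENNReal.ofReal (t ^ 2 - s ^ 2) := by
  rw [ann, measure_sdiff (closedBall_subset_ball hst)
      measurableSet_closedBall.nullMeasurableSet (by simp [dA_closedBall]),
    dA_ball, dA_closedBall, ← ENNReal.ofReal_pow hs, ← ENNReal.ofReal_pow (hs.trans hst.le),
    ENNReal.ofReal_sub _ (by positivity)]

theorem setLIntegral_ball_dA_eq (F : ℂ → ℝ≥0∞) {s : ℝ} (hs : 0 < s) :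
    ∫⁻ z in ball (0:ℂ) s, F z ∂dA =
      ENNReal.ofReal (s ^ 2) * ∫⁻ w in ball (0:ℂ) 1, F (s • w) ∂dA := by
  have hemb : MeasurableEmbedding (fun w : ℂ => s • w) :=
    measurableEmbedding_const_smul₀ hs.ne'
  have hpre : (fun w : ℂ => s • w) ⁻¹' ball 0 s = ball 0 1 := by
    ext w
    simp [abs_of_pos hs, mul_lt_iff_lt_one_right hs]
  have hvol : ∫⁻ w in ball (0:ℂ) 1, F (s • w) =
      ENNReal.ofReal ((s ^ 2)⁻¹) * ∫⁻ z in ball (0:ℂ) s, F z := by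
    rw [← hpre, ← hemb.lintegral_map, ← hemb.restrict_map, Measure.map_addHaar_smul _ hs.ne',
      Complex.finrank_real_complex, abs_of_pos (by positivity), Measure.restrict_smul,
      lintegral_smul_measure, smul_eq_mul]
  have hcancel : ENNReal.ofReal (s ^ 2) * ENNReal.ofReal ((s ^ 2)⁻¹) = 1 := by
    rw [← ENNReal.ofReal_mul (by positivity), mul_inv_cancel₀ (by positivity), ENNReal.ofReal_one]
  rw [dA, Measure.restrict_smul, Measure.restrict_smul, lintegral_smul_measure,
    lintegral_smul_measure, smul_eq_mul, smul_eq_mul, hvol, mul_left_comm,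
    ← mul_assoc (ENNReal.ofReal (s ^ 2)), hcancel, one_mul]

noncomputable def planarDiscrepancy (γ : ℝ) (f : ℂ → ℂ) (z : ℂ) : ℝ≥0∞ :=
  ENNReal.ofReal ((‖f z‖ * Real.exp (-γ * ‖z‖ ^ 2) - 1) ^ 2)

theorem rhoC_eq_setLIntegral (γ : ℝ) (f : ℂ → ℂ) :
    rhoC γ f = ∫⁻ z in ball (0:ℂ) 1, planarDiscrepancy γ f z ∂dA := rfl

noncomputable def rhoCPolyInf (γ : ℝ) : ℝ≥0∞ := ⨅ p : ℂ[X], rhoC γ fun z => p.eval z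

theorem rhoCd_eq_liminf : rhoCd = liminf rhoCPolyInf atTop := rfl

theorem rhoCPolyInf_le_one (γ : ℝ) : rhoCPolyInf γ ≤ 1 :=
  (iInf_le _ 0).trans_eq <| by simp [rhoC, dA_ball]

theorem rhoCd_ne_top : rhoCd ≠ ∞ :=
  ne_top_of_le_ne_top ENNReal.one_ne_top <|
    liminf_le_of_frequently_le (Frequently.of_forall rhoCPolyInf_le_one)

theorem setLIntegral_ball_planarDiscrepancy (γ : ℝ) (f : ℂ → ℂ) {s : ℝ} (hs : 0 < s) :
    ∫⁻ z in ball (0:ℂ) s, planarDiscrepancy γ f z ∂dA =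
      ENNReal.ofReal (s ^ 2) * rhoC (γ * s ^ 2) (fun w => f (s • w)) := by
  rw [setLIntegral_ball_dA_eq _ hs, rhoC_eq_setLIntegral]
  congr 2 with w
  simp only [planarDiscrepancy, norm_smul, Real.norm_of_nonneg hs.le]
  ring_nf

theorem setLIntegral_ann_add_setLIntegral_ball_le (F : ℂ → ℝ≥0∞) {s : ℝ} (hs : s ≤ 1) :
    (∫⁻ z in ann s 1, F z ∂dA) + ∫⁻ z in ball (0:ℂ) s, F z ∂dA ≤ ∫⁻ z in ball (0:ℂ) 1, F z ∂dA := by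
  have hdisj : Disjoint (ann s 1) (ball 0 s) :=
    disjoint_sdiff_left.mono_right ball_subset_closedBall
  rw [← lintegral_union measurableSet_ball hdisj]
  exact lintegral_mono_set (union_subset sdiff_subset (ball_subset_ball hs))

theorem ofReal_sq_mul_exp_le_planarDiscrepancy (γ : ℝ) (f : ℂ → ℂ) (z : ℂ) :
    ENNReal.ofReal (‖f z‖ ^ 2 * Real.exp (-(2 * γ) * ‖z‖ ^ 2)) ≤
      2 * planarDiscrepancy γ f z + 2 := by
  set a := ‖f z‖ * Real.exp (-γ * ‖z‖ ^ 2)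
  have ha : ‖f z‖ ^ 2 * Real.exp (-(2 * γ) * ‖z‖ ^ 2) = a ^ 2 := by
    rw [mul_pow, ← Real.exp_nat_mul]
    ring_nf
  rw [ha, planarDiscrepancy, show (2 : ℝ≥0∞) = ENNReal.ofReal 2 by simp,
    ← ENNReal.ofReal_mul zero_le_two, ← ENNReal.ofReal_add (by positivity) zero_le_two]
  exact ENNReal.ofReal_le_ofReal (by nlinarith [sq_nonneg (a - 2)])

theorem setLIntegral_sq_mul_exp_le (γ : ℝ) (f : ℂ → ℂ) (A : Set ℂ) :
    ∫⁻ z in A, ENNReal.ofReal (‖f z‖ ^ 2 * Real.exp (-(2 * γ) * ‖z‖ ^ 2)) ∂dA ≤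
      2 * ∫⁻ z in A, planarDiscrepancy γ f z ∂dA + 2 * dA A := by
  calc _ ≤ ∫⁻ z in A, (2 * planarDiscrepancy γ f z + 2) ∂dA :=
        lintegral_mono fun z => ofReal_sq_mul_exp_le_planarDiscrepancy γ f z
    _ = _ := by
      rw [lintegral_add_right _ measurable_const, setLIntegral_const,
        lintegral_const_mul' _ _ ENNReal.ofNat_ne_top]

theorem exists_polynomial_norm_sub_lt {f : ℂ → ℂ} {r : ℝ≥0} {R : ℝ}
    (hf : DifferentiableOn ℂ f (ball 0 R)) (hrR : (r : ℝ) < R) {ε : ℝ} (hε : 0 < ε) :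
    ∃ q : ℂ[X], ∀ z ∈ closedBall (0:ℂ) r, ‖q.eval z - f z‖ < ε := by
  obtain ⟨R', hrR', hR'R⟩ := exists_between hrR
  lift R' to ℝ≥0 using r.2.trans hrR'.le
  have hP := (hf.mono (closedBall_subset_ball hR'R)).hasFPowerSeriesOnBall
    (NNReal.coe_pos.1 (r.2.trans_lt hrR'))
  set P := cauchyPowerSeries f 0 R'
  have hU : TendstoUniformlyOn (fun n y => P.partialSum n y) (fun y => f (0 + y)) atTop
      (closedBall 0 r) := by
    refine (tendstoLocallyUniformlyOn_iff_tendstoUniformlyOn_of_compact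
      (isCompact_closedBall 0 _)).1 (hP.tendstoLocallyUniformlyOn.mono ?_)
    rw [Metric.eball_coe]
    exact closedBall_subset_ball hrR'
  obtain ⟨n, hn⟩ := (Metric.tendstoUniformlyOn_iff.1 hU ε hε).exists
  refine ⟨∑ i ∈ Finset.range n, C (P.coeff i) * X ^ i, fun z hz => ?_⟩
  have hq : (∑ i ∈ Finset.range n, C (P.coeff i) * X ^ i).eval z = P.partialSum n z := by
    simp only [eval_finsetSum, eval_mul, eval_C, eval_pow, eval_X,
      FormalMultilinearSeries.partialSum, FormalMultilinearSeries.apply_eq_pow_smul_coeff,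
      smul_eq_mul, mul_comm]
  rw [hq, ← dist_eq_norm, dist_comm]
  simpa using hn z hz

theorem sq_sub_one_le_sq_sub_one_add {u v M η : ℝ} (hv : 0 ≤ v) (hvM : v ≤ M)
    (huv : |u - v| ≤ η) (hη : η ≤ 1) : (u - 1) ^ 2 ≤ (v - 1) ^ 2 + η * (2 * M + 3) := by
  obtain ⟨h₁, h₂⟩ := abs_le.1 huv
  have ha : 0 ≤ η - (u - v) := by linarith
  have hb : 0 ≤ η + (u - v) := by linarith
  have hMv : 0 ≤ M - v := by linarith
  have hη0 : 0 ≤ η := by linarith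
  nlinarith [mul_nonneg ha hb, mul_nonneg hη0 (sub_nonneg.2 hη),
    mul_nonneg ha hv, mul_nonneg hb hv, mul_nonneg ha hMv, mul_nonneg hb hMv]

theorem rhoC_le_rhoC_add_of_norm_sub_le {γ : ℝ} (hγ : 0 ≤ γ) {g h : ℂ → ℂ} {M η : ℝ}
    (hg : ∀ z ∈ ball (0:ℂ) 1, ‖g z‖ ≤ M) (hgh : ∀ z ∈ ball (0:ℂ) 1, ‖h z - g z‖ ≤ η)
    (hη : η ≤ 1) : rhoC γ h ≤ rhoC γ g + ENNReal.ofReal (η * (2 * M + 3)) := by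
  have hpt : ∀ z ∈ ball (0:ℂ) 1,
      planarDiscrepancy γ h z ≤ planarDiscrepancy γ g z + ENNReal.ofReal (η * (2 * M + 3)) := by
    intro z hz
    set E := Real.exp (-γ * ‖z‖ ^ 2)
    have hE0 : 0 < E := Real.exp_pos _
    have hE1 : E ≤ 1 := Real.exp_le_one_iff.2 (by nlinarith [sq_nonneg ‖z‖])
    have hvM : ‖g z‖ * E ≤ M := (mul_le_of_le_one_right (norm_nonneg _) hE1).trans (hg z hz)
    have huv : |‖h z‖ * E - ‖g z‖ * E| ≤ η := by
      rw [← sub_mul, abs_mul, abs_of_pos hE0]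
      exact (mul_le_of_le_one_right (abs_nonneg _) hE1).trans
        ((abs_norm_sub_norm_le _ _).trans (hgh z hz))
    exact (ENNReal.ofReal_le_ofReal (sq_sub_one_le_sq_sub_one_add (by positivity) hvM huv hη)).trans
      ENNReal.ofReal_add_le
  calc rhoC γ h ≤ ∫⁻ z in ball (0:ℂ) 1,
        (planarDiscrepancy γ g z + ENNReal.ofReal (η * (2 * M + 3))) ∂dA :=
      setLIntegral_mono' measurableSet_ball hpt
    _ = rhoC γ g + ENNReal.ofReal (η * (2 * M + 3)) := by
      rw [lintegral_add_right _ measurable_const, setLIntegral_const, dA_ball]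
      simp [rhoC_eq_setLIntegral]

theorem rhoCPolyInf_le_rhoC {γ : ℝ} (hγ : 0 ≤ γ) {g : ℂ → ℂ} {R : ℝ} (hR : 1 < R)
    (hg : DifferentiableOn ℂ g (ball 0 R)) : rhoCPolyInf γ ≤ rhoC γ g := by
  obtain ⟨M, hM⟩ := (isCompact_closedBall (0:ℂ) 1).exists_bound_of_continuousOn
    (hg.continuousOn.mono (closedBall_subset_ball hR))
  have hM0 : 0 ≤ M := (norm_nonneg _).trans (hM 0 (by simp))
  refine ENNReal.le_of_forall_pos_le_add fun ε hε _ => ?_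
  set η := min 1 (ε / (2 * M + 3))
  have hη : 0 < η := lt_min one_pos (by positivity)
  obtain ⟨q, hq⟩ := exists_polynomial_norm_sub_lt (r := 1) hg (by simpa using hR) hη
  calc rhoCPolyInf γ ≤ rhoC γ fun z => q.eval z := iInf_le _ q
    _ ≤ rhoC γ g + ENNReal.ofReal (η * (2 * M + 3)) :=
      rhoC_le_rhoC_add_of_norm_sub_le hγ (fun z hz => hM z (ball_subset_closedBall hz))
        (fun z hz => (hq z (by simpa using ball_subset_closedBall hz)).le) (min_le_left _ _)
    _ ≤ rhoC γ g + ε := by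
      gcongr
      rw [← ENNReal.ofReal_coe_nnreal]
      gcongr
      exact (le_div_iff₀ (by positivity)).1 (min_le_right _ _)

theorem rhoCPolyInf_mul_le_setLIntegral_ball {γ s : ℝ} (hγ : 0 ≤ γ) (hs0 : 0 < s) (hs1 : s < 1)
    {f : ℂ → ℂ} (hf : DifferentiableOn ℂ f (ball 0 1)) :
    ENNReal.ofReal (s ^ 2) * rhoCPolyInf (γ * s ^ 2) ≤
      ∫⁻ z in ball (0:ℂ) s, planarDiscrepancy γ f z ∂dA := by
  have hmaps : MapsTo (fun w : ℂ => s • w) (ball 0 s⁻¹) (ball 0 1) := fun w hw => by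
    simpa [norm_smul, abs_of_pos hs0] using (lt_inv_mul_iff₀ hs0).1 (by simpa using hw)
  rw [setLIntegral_ball_planarDiscrepancy γ f hs0]
  gcongr
  exact rhoCPolyInf_le_rhoC (by positivity) ((one_lt_inv₀ hs0).2 hs1)
    (hf.comp (differentiable_id.const_smul s).differentiableOn hmaps)

theorem rhoCd_le_liminf_setLIntegral_ball {ι : Type*} {l : Filter ι} [l.NeBot] {γ s : ι → ℝ}
    {f : ι → ℂ → ℂ} (hγ : Tendsto γ l atTop) (hs : Tendsto s l (𝓝 1)) (hs0 : ∀ i, 0 < s i)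
    (hs1 : ∀ i, s i < 1) (hf : ∀ i, DifferentiableOn ℂ (f i) (ball 0 1)) :
    rhoCd ≤ liminf (fun i => ∫⁻ z in ball (0:ℂ) (s i), planarDiscrepancy (γ i) (f i) z ∂dA) l := by
  have hs2 : Tendsto (fun i => ENNReal.ofReal (s i ^ 2)) l (𝓝 1) := by
    simpa using ENNReal.tendsto_ofReal (hs.pow 2)
  have hγs : Tendsto (fun i => γ i * s i ^ 2) l atTop :=
    hγ.atTop_mul_pos one_pos (by simpa using hs.pow 2)
  calc rhoCd = liminf (fun i => ENNReal.ofReal (s i ^ 2)) l * liminf rhoCPolyInf atTop := by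
        rw [hs2.liminf_eq, one_mul, rhoCd_eq_liminf]
    _ ≤ liminf (fun i => ENNReal.ofReal (s i ^ 2)) l *
          liminf (fun i => rhoCPolyInf (γ i * s i ^ 2)) l := by
        gcongr
        exact hγs.liminf_le_liminf_comp
    _ ≤ liminf (fun i => ENNReal.ofReal (s i ^ 2) * rhoCPolyInf (γ i * s i ^ 2)) l :=
        ENNReal.le_liminf_mul
    _ ≤ _ := by
        refine liminf_le_liminf ?_
        filter_upwards [hγ.eventually_ge_atTop 0] with i hγi
        exact rhoCPolyInf_mul_le_setLIntegral_ball hγi (hs0 i) (hs1 i) (hf i)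

theorem planar_L2_nonconcentration_general (γ : ℕ → ℝ)
    (hγ : Tendsto γ atTop atTop)
    (p : ℕ → Polynomial ℂ)
    (hp : Tendsto (fun k => rhoC (γ k) fun z => (p k).eval z) atTop (𝓝 rhoCd))
    (δ : ℕ → ℝ) (hδ : ∀ k, δ k ∈ Ioo (0:ℝ) 1) (hδ0 : Tendsto δ atTop (𝓝 0))
    (f : ℕ → ℂ → ℂ) (hf : ∀ k, IsMinC (γ k) (f k)) :
    Tendsto (fun k => ∫⁻ z in ann (1 - δ k) 1, ENNReal.ofReal
        (‖f k z‖ ^ 2 * Real.exp (-(2 * γ k) * ‖z‖ ^ 2)) ∂dA)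
      atTop (𝓝 0) := by
  have hs : Tendsto (fun k => 1 - δ k) atTop (𝓝 1) := by
    simpa using tendsto_const_nhds.sub hδ0
  have hs0 (k : ℕ) : 0 < 1 - δ k := sub_pos.2 (hδ k).2
  have hs1 (k : ℕ) : 1 - δ k < 1 := sub_lt_self _ (hδ k).1
  have hmass : Tendsto (fun k => ∫⁻ z in ann (1 - δ k) 1, planarDiscrepancy (γ k) (f k) z ∂dA)
      atTop (𝓝 0) := by
    refine tendsto_nhds_zero_of_add_le_of_le_liminf rhoCd_ne_top (.of_forall fun k => ?_) hp
      (rhoCd_le_liminf_setLIntegral_ball hγ hs hs0 hs1 fun k => (hf k).1)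
    exact (setLIntegral_ann_add_setLIntegral_ball_le _ (hs1 k).le).trans
      ((hf k).2 _ (p k).differentiable.differentiableOn)
  have harea : Tendsto (fun k => dA (ann (1 - δ k) 1)) atTop (𝓝 0) := by
    simp_rw [dA_ann (hs0 _).le (hs1 _)]
    simpa using ENNReal.tendsto_ofReal ((tendsto_const_nhds (x := (1:ℝ))).sub (hs.pow 2))
  refine tendsto_of_tendsto_of_tendsto_of_le_of_le tendsto_const_nhds ?_ (fun _ => zero_le)
    fun k => setLIntegral_sq_mul_exp_le (γ k) (f k) _
  simpa using (ENNReal.Tendsto.const_mul hmass (.inr ENNReal.ofNat_ne_top)).add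
    (ENNReal.Tendsto.const_mul harea (.inr ENNReal.ofNat_ne_top))

/-- planar L²-non-concentration. Let `γ_k → ∞` be positive with
polynomials `p_k` satisfying `ρ_{C,γ_k}(p_k) → ρ_C`, let `δ_k ∈ (0,1)` tend to 0,
and let `f_k` minimize `ρ_{C,γ_k}`. Then
`∫_{𝔸(1-δ_k,1)} |f_k|² e^{-2γ_k|z|²} dA → 0`. -/
theorem planar_L2_nonconcentration (γ : ℕ → ℝ) (hγpos : ∀ k, 0 < γ k)
    (hγ : Tendsto γ atTop atTop)
    (p : ℕ → Polynomial ℂ)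
    (hp : Tendsto (fun k => rhoC (γ k) fun z => (p k).eval z) atTop (𝓝 rhoCd))
    (δ : ℕ → ℝ) (hδ : ∀ k, δ k ∈ Ioo (0:ℝ) 1) (hδ0 : Tendsto δ atTop (𝓝 0))
    (f : ℕ → ℂ → ℂ) (hf : ∀ k, IsMinC (γ k) (f k)) :
    Tendsto (fun k => ∫⁻ z in ann (1 - δ k) 1, ENNReal.ofReal
        (‖f k z‖ ^ 2 * Real.exp (-(2 * γ k) * ‖z‖ ^ 2)) ∂dA)
      atTop (𝓝 0) :=
  planar_L2_nonconcentration_general γ hγ p hp δ hδ hδ0 f hf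
end

section
/- Hyperbolic L¹-non-concentration: if 0 < r < 1, 0 < δ < 1 and f is a minimizer of ρ_{H,r}, then (1/log(1/(1−r²))) ∫_{𝔸(r(1−δ), r)} |f(z)| dA(z) ≤ (1 − log(1/(1−r²(1−δ)²)) / log(1/(1−r²)))^{1/2}. In particular, if for each r one takes δ = 1−r and f_r a minimizer of ρ_{H,r}, then (1/log(1/(1−r²))) ∫_{𝔸(r(1−δ), r)} |f_r(z)| dA(z) → 0 as r → 1⁻. -/
open MeasureTheory Filter Set Metric Polynomial
open scoped ENNReal Topology NNReal

/-!
Testing the minimality of `f` against its real multiples `t • f` makes `ρ_{H,r}(t f)` a quadratic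
polynomial in `t ≥ 0` that is minimal, and nonnegative, at `t = 1`; this forces
`∫_{D(0,r)} (1 - |z|²)|f|² dA ≤ log(1/(1-r²))`. Cauchy–Schwarz with the weight `1 - |z|²` on the
annulus `𝔸 = 𝔸(s,r)` bounds `∫_𝔸 |f| dA` by the square root of this integral times
`(∫_𝔸 dA/(1-|z|²))^{1/2}`, and the latter is `log(1/(1-r²)) - log(1/(1-s²))` in polar coordinates.
For `δ = 1 - r` one has `1 - r⁴ = (1 - r²)(1 + r²)`, so the bound is
`(log(1 + r²) / log(1/(1-r²)))^{1/2} → 0`.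
-/

open Real

lemma integral_mul_inv_one_sub_sq {a b : ℝ} (hab : a ≤ b) (ha : -1 < a) (hb : b < 1) :
    ∫ y in a..b, y * (1 - y ^ 2)⁻¹ = (log (1 / (1 - b ^ 2)) - log (1 / (1 - a ^ 2))) / 2 := by
  have hpos : ∀ y ∈ uIcc a b, 0 < 1 - y ^ 2 := by
    intro y hy
    rw [uIcc_of_le hab] at hy
    nlinarith [hy.1, hy.2]
  have hderiv : ∀ y ∈ uIcc a b,
      HasDerivAt (fun y => -log (1 - y ^ 2) / 2) (y * (1 - y ^ 2)⁻¹) y := by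
    intro y hy
    have h := (((hasDerivAt_pow 2 y).const_sub 1).log (hpos y hy).ne').neg.div_const 2
    refine h.congr_deriv ?_
    field_simp
    ring
  have hcont : ContinuousOn (fun y : ℝ => y * (1 - y ^ 2)⁻¹) (uIcc a b) :=
    continuousOn_id.mul ((by fun_prop : Continuous fun y : ℝ => 1 - y ^ 2).continuousOn.inv₀
      fun y hy => (hpos y hy).ne')
  rw [intervalIntegral.integral_eq_sub_of_hasDerivAt hderiv hcont.intervalIntegrable,
    one_div, one_div, log_inv, log_inv]
  ring

lemma indicator_ann_apply {E : Type*} [Zero E] (s t : ℝ) (g : ℝ → E) (z : ℂ) :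
    (ann s t).indicator (fun z => g ‖z‖) z = (Ioo s t).indicator g ‖z‖ := by
  by_cases hz : ‖z‖ ∈ Ioo s t
  · rw [indicator_of_mem hz, indicator_of_mem (by simpa [ann] using hz.symm)]
  · rw [indicator_of_notMem hz, indicator_of_notMem (by simpa [ann, and_comm] using hz)]

lemma integral_ann_inv_one_sub_norm_sq {s t : ℝ} (hs : 0 ≤ s) (hst : s ≤ t) (ht : t < 1) :
    ∫ z in ann s t, (1 - ‖z‖ ^ 2)⁻¹ = π * (log (1 / (1 - t ^ 2)) - log (1 / (1 - s ^ 2))) := by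
  have hann : MeasurableSet (ann s t) := measurableSet_ball.diff measurableSet_closedBall
  rw [← integral_indicator hann]
  simp_rw [indicator_ann_apply s t (fun y => (1 - y ^ 2)⁻¹)]
  rw [integral_fun_norm_addHaar, Complex.finrank_real_complex, measureReal_def,
    Complex.volume_ball]
  simp_rw [show (2:ℕ) - 1 = 1 from rfl, pow_one, smul_eq_mul,
    ← indicator_mul_right _ (fun y : ℝ => y)]
  rw [setIntegral_indicator measurableSet_Ioo, Ioi_inter_Ioo, max_eq_right hs,
    ← integral_Ioc_eq_integral_Ioo, ← intervalIntegral.integral_of_le hst,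
    integral_mul_inv_one_sub_sq hst (by linarith) ht]
  simp only [ENNReal.ofReal_one, one_pow, one_mul, ENNReal.coe_toReal, NNReal.coe_real_pi, one_div,
    log_inv, sub_neg_eq_add, nsmul_eq_mul, Nat.cast_ofNat]
  ring

lemma one_sub_norm_sq_pos {z : ℂ} {t : ℝ} (hz : z ∈ closedBall (0:ℂ) t) (ht : t < 1) :
    0 < 1 - ‖z‖ ^ 2 := by
  have := mem_closedBall_zero_iff.1 hz
  nlinarith [norm_nonneg z]

lemma lintegral_ann_inv_one_sub_norm_sq {s t : ℝ} (hs : 0 ≤ s) (hst : s ≤ t) (ht : t < 1) :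
    ∫⁻ z in ann s t, ENNReal.ofReal ((1 - ‖z‖ ^ 2)⁻¹) ∂dA
      = ENNReal.ofReal (log (1 / (1 - t ^ 2)) - log (1 / (1 - s ^ 2))) := by
  have hsub : ann s t ⊆ closedBall 0 t := sdiff_subset.trans ball_subset_closedBall
  have hint : IntegrableOn (fun z : ℂ => (1 - ‖z‖ ^ 2)⁻¹) (ann s t) :=
    (ContinuousOn.integrableOn_compact (isCompact_closedBall 0 t)
      ((by fun_prop : Continuous fun z : ℂ => 1 - ‖z‖ ^ 2).continuousOn.inv₀
        fun z hz => (one_sub_norm_sq_pos hz ht).ne')).mono_set hsub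
  have hnn : 0 ≤ᵐ[volume.restrict (ann s t)] fun z : ℂ => (1 - ‖z‖ ^ 2)⁻¹ :=
    (ae_restrict_iff' (measurableSet_ball.diff measurableSet_closedBall)).2 <|
      .of_forall fun z hz => (inv_pos.2 (one_sub_norm_sq_pos (hsub hz) ht)).le
  rw [dA, Measure.restrict_smul, lintegral_smul_measure, smul_eq_mul,
    ← ofReal_integral_eq_lintegral_ofReal hint hnn, integral_ann_inv_one_sub_norm_sq hs hst ht,
    ENNReal.ofReal_mul pi_nonneg, ← mul_assoc,
    ENNReal.inv_mul_cancel (ENNReal.ofReal_pos.2 pi_pos).ne' ENNReal.ofReal_ne_top, one_mul]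

lemma lintegral_ball_inv_one_sub_norm_sq {t : ℝ} (ht0 : 0 ≤ t) (ht : t < 1) :
    ∫⁻ z in ball (0:ℂ) t, ENNReal.ofReal ((1 - ‖z‖ ^ 2)⁻¹) ∂dA
      = ENNReal.ofReal (log (1 / (1 - t ^ 2))) := by
  have hnull : dA (closedBall (0:ℂ) 0) = 0 := by simp [dA]
  rw [← setLIntegral_congr (sdiff_null_ae_eq_self hnull), ← ann,
    lintegral_ann_inv_one_sub_norm_sq le_rfl ht0 ht]
  simp

section Weighted

variable {α : Type*} [MeasurableSpace α] {μ : Measure α} {s : Set α} {w g : α → ℝ}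

lemma setLIntegral_discrepancy_add (hs : MeasurableSet s) (hw : ∀ x ∈ s, 0 < w x) (hg : 0 ≤ g)
    (hwm : AEMeasurable w (μ.restrict s)) (hgm : AEMeasurable g (μ.restrict s))
    {t : ℝ} (ht : 0 ≤ t) :
    ∫⁻ x in s, ENNReal.ofReal ((w x * (t * g x) - 1) ^ 2 / w x) ∂μ
        + ENNReal.ofReal (2 * t) * ∫⁻ x in s, ENNReal.ofReal (g x) ∂μ
      = ENNReal.ofReal (t ^ 2) * ∫⁻ x in s, ENNReal.ofReal (w x * g x ^ 2) ∂μ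
        + ∫⁻ x in s, ENNReal.ofReal (w x)⁻¹ ∂μ := by
  rw [← lintegral_const_mul' _ _ ENNReal.ofReal_ne_top, ← lintegral_const_mul' _ _
      ENNReal.ofReal_ne_top, ← lintegral_add_right' _ ((hgm.ennreal_ofReal).const_mul _),
    ← lintegral_add_right' (g := fun x => ENNReal.ofReal (w x)⁻¹) _ hwm.inv.ennreal_ofReal]
  refine setLIntegral_congr_fun hs fun x hx => ?_
  have hwx := hw x hx
  have hgx : 0 ≤ g x := hg x
  rw [← ENNReal.ofReal_mul (by positivity), ← ENNReal.ofReal_mul (by positivity),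
    ← ENNReal.ofReal_add (by positivity) (by positivity),
    ← ENNReal.ofReal_add (by positivity) (by positivity)]
  congr 1
  field_simp
  ring

lemma setLIntegral_le_weighted_cauchySchwarz (hs : MeasurableSet s) (hw : ∀ x ∈ s, 0 < w x)
    (hg : 0 ≤ g) (hwm : AEMeasurable w (μ.restrict s)) (hgm : AEMeasurable g (μ.restrict s)) :
    ∫⁻ x in s, ENNReal.ofReal (g x) ∂μ
      ≤ (∫⁻ x in s, ENNReal.ofReal (w x * g x ^ 2) ∂μ) ^ (1 / 2 : ℝ)
        * (∫⁻ x in s, ENNReal.ofReal (w x)⁻¹ ∂μ) ^ (1 / 2 : ℝ) := by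
  calc ∫⁻ x in s, ENNReal.ofReal (g x) ∂μ
      = ∫⁻ x in s, ENNReal.ofReal (w x * g x ^ 2) ^ (1 / 2 : ℝ)
          * ENNReal.ofReal (w x)⁻¹ ^ (1 / 2 : ℝ) ∂μ := by
        refine setLIntegral_congr_fun hs fun x hx => ?_
        have hwx := hw x hx
        have hgx : 0 ≤ g x := hg x
        rw [ENNReal.ofReal_rpow_of_nonneg (by positivity) (by norm_num),
          ENNReal.ofReal_rpow_of_nonneg (by positivity) (by norm_num),
          ← ENNReal.ofReal_mul (by positivity), ← mul_rpow (by positivity) (by positivity),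
          show w x * g x ^ 2 * (w x)⁻¹ = g x ^ 2 by field_simp, ← sqrt_eq_rpow, sqrt_sq hgx]
    _ ≤ _ := ENNReal.lintegral_mul_norm_pow_le ((hwm.mul (hgm.pow_const 2)).ennreal_ofReal)
        hwm.inv.ennreal_ofReal (by norm_num) (by norm_num) (by norm_num)

end Weighted

lemma toReal_eq_of_add_ofReal_mul_eq {x a b : ℝ≥0∞} {p q c : ℝ} (hp : 0 ≤ p) (hq : 0 ≤ q)
    (hc : 0 ≤ c) (ha : a ≠ ∞) (hb : b ≠ ∞)
    (h : x + ENNReal.ofReal p * b = ENNReal.ofReal q * a + ENNReal.ofReal c) :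
    x.toReal = q * a.toReal - p * b.toReal + c := by
  have hx : x ≠ ∞ := ne_top_of_le_ne_top (by finiteness) (le_self_add.trans h.le)
  have h := congrArg ENNReal.toReal h
  rw [ENNReal.toReal_add hx (by finiteness), ENNReal.toReal_add (by finiteness) (by finiteness),
    ENNReal.toReal_mul, ENNReal.toReal_mul, ENNReal.toReal_ofReal hp, ENNReal.toReal_ofReal hq,
    ENNReal.toReal_ofReal hc] at h
  linarith

lemma le_of_isMinOn_quadratic {a b c : ℝ} (ha : 0 ≤ a) (hb : 0 ≤ b)
    (hmin : IsMinOn (fun t => t ^ 2 * a - 2 * t * b) (Ici 0) 1) (hc : 0 ≤ a - 2 * b + c) :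
    a ≤ c := by
  rcases ha.eq_or_lt with rfl | ha
  · linarith
  -- the vertex `t = b / a` of the parabola gives `(a - b)² ≤ 0`
  have h : 1 ^ 2 * a - 2 * 1 * b ≤ (b / a) ^ 2 * a - 2 * (b / a) * b :=
    hmin (mem_Ici.2 (div_nonneg hb ha.le))
  have hab : (a - b) ^ 2 ≤ 0 := by
    field_simp at h
    nlinarith
  nlinarith [sq_nonneg (a - b)]

instance : IsFiniteMeasureOnCompacts dA :=
  IsFiniteMeasureOnCompacts.smul _ (ENNReal.inv_ne_top.2 (ENNReal.ofReal_pos.2 pi_pos).ne')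

lemma setLIntegral_ball_ofReal_ne_top {X : Type*} [MetricSpace X] [ProperSpace X]
    [MeasurableSpace X] [OpensMeasurableSpace X] {μ : Measure X} [IsFiniteMeasureOnCompacts μ]
    {φ : X → ℝ} {x : X} {r : ℝ} (hφ : ContinuousOn φ (closedBall x r)) :
    ∫⁻ z in ball x r, ENNReal.ofReal (φ z) ∂μ ≠ ∞ :=
  ((hφ.integrableOn_compact (isCompact_closedBall x r)).mono_set
    ball_subset_closedBall).lintegral_lt_top.ne

lemma rhoH_ofReal_mul (r : ℝ) (f : ℂ → ℂ) {t : ℝ} (ht : 0 ≤ t) :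
    rhoH r (fun z => (t : ℂ) * f z) = (ENNReal.ofReal (log (1 / (1 - r ^ 2))))⁻¹ *
      ∫⁻ z in ball (0:ℂ) r,
        ENNReal.ofReal (((1 - ‖z‖ ^ 2) * (t * ‖f z‖) - 1) ^ 2 / (1 - ‖z‖ ^ 2)) ∂dA := by
  simp only [rhoH, norm_mul, Complex.norm_real, norm_of_nonneg ht]

lemma log_one_div_one_sub_sq_pos {r : ℝ} (hr0 : 0 < r) (hr1 : r < 1) :
    0 < log (1 / (1 - r ^ 2)) :=
  log_pos (by rw [one_div, one_lt_inv₀ (by nlinarith)]; nlinarith)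

lemma IsMinH.lintegral_weighted_sq_le {r : ℝ} {f : ℂ → ℂ} (hf : IsMinH r f) (hr0 : 0 < r)
    (hr1 : r < 1) :
    ∫⁻ z in ball (0:ℂ) r, ENNReal.ofReal ((1 - ‖z‖ ^ 2) * ‖f z‖ ^ 2) ∂dA
      ≤ ENNReal.ofReal (log (1 / (1 - r ^ 2))) := by
  set L := log (1 / (1 - r ^ 2))
  have hL := log_one_div_one_sub_sq_pos hr0 hr1
  set A := ∫⁻ z in ball (0:ℂ) r, ENNReal.ofReal ((1 - ‖z‖ ^ 2) * ‖f z‖ ^ 2) ∂dA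
  set B := ∫⁻ z in ball (0:ℂ) r, ENNReal.ofReal ‖f z‖ ∂dA
  set E : ℝ → ℝ≥0∞ := fun t => ∫⁻ z in ball (0:ℂ) r,
    ENNReal.ofReal (((1 - ‖z‖ ^ 2) * (t * ‖f z‖) - 1) ^ 2 / (1 - ‖z‖ ^ 2)) ∂dA
  have hfc : ContinuousOn f (closedBall 0 r) := hf.1.continuousOn.mono (closedBall_subset_ball hr1)
  have hA : A ≠ ∞ := setLIntegral_ball_ofReal_ne_top
    ((by fun_prop : Continuous fun z : ℂ => 1 - ‖z‖ ^ 2).continuousOn.mul (hfc.norm.pow 2))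
  have hB : B ≠ ∞ := setLIntegral_ball_ofReal_ne_top hfc.norm
  have hexp : ∀ t, 0 ≤ t → E t + ENNReal.ofReal (2 * t) * B = ENNReal.ofReal (t ^ 2) * A
      + ENNReal.ofReal L := fun t ht => by
    rw [← lintegral_ball_inv_one_sub_norm_sq hr0.le hr1]
    exact setLIntegral_discrepancy_add measurableSet_ball
      (fun z hz => one_sub_norm_sq_pos (ball_subset_closedBall hz) hr1) (fun z => norm_nonneg _)
      (by fun_prop) ((hfc.mono ball_subset_closedBall).norm.aemeasurable measurableSet_ball) ht
  have hE : ∀ t, 0 ≤ t → E t ≠ ∞ := fun t ht =>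
    ne_top_of_le_ne_top (by finiteness) (le_self_add.trans (hexp t ht).le)
  have hE_toReal : ∀ t, 0 ≤ t → (E t).toReal = t ^ 2 * A.toReal - 2 * t * B.toReal + L :=
    fun t ht => toReal_eq_of_add_ofReal_mul_eq (by positivity) (by positivity) hL.le hA hB
      (hexp t ht)
  have hmin : ∀ t, 0 ≤ t → E 1 ≤ E t := fun t ht => by
    have h := hf.2 (fun z => (t : ℂ) * f z) ((differentiableOn_const _).mul hf.1)
    rw [show rhoH r f = rhoH r (fun z => ((1 : ℝ) : ℂ) * f z) by simp,
      rhoH_ofReal_mul r f zero_le_one, rhoH_ofReal_mul r f ht] at h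
    exact (ENNReal.mul_le_mul_iff_right (ENNReal.inv_ne_zero.2 ENNReal.ofReal_ne_top)
      (ENNReal.inv_ne_top.2 (ENNReal.ofReal_pos.2 hL).ne')).1 h
  refine (ENNReal.le_ofReal_iff_toReal_le hA hL.le).2 <|
    le_of_isMinOn_quadratic (b := B.toReal) ENNReal.toReal_nonneg ENNReal.toReal_nonneg
      (fun t ht => ?_) ?_
  · have h := (ENNReal.toReal_le_toReal (hE 1 zero_le_one) (hE t ht)).2 (hmin t ht)
    rw [hE_toReal 1 zero_le_one, hE_toReal t ht] at h
    simp only [mem_ofPred_eq]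
    linarith
  · linarith [hE_toReal 1 zero_le_one, (E 1).toReal_nonneg]

lemma ofReal_inv_mul_rpow_half_mul_rpow_half {L M : ℝ} (hL : 0 < L) (hM : 0 ≤ M) :
    (ENNReal.ofReal L)⁻¹ * (ENNReal.ofReal L ^ (1 / 2 : ℝ) * ENNReal.ofReal M ^ (1 / 2 : ℝ))
      = ENNReal.ofReal (√(M / L)) := by
  rw [ENNReal.ofReal_rpow_of_nonneg hL.le (by norm_num), ENNReal.ofReal_rpow_of_nonneg hM
      (by norm_num), ← sqrt_eq_rpow, ← sqrt_eq_rpow, ← ENNReal.ofReal_inv_of_pos hL,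
    ← ENNReal.ofReal_mul (by positivity), ← ENNReal.ofReal_mul (by positivity), sqrt_div' _ hL.le]
  congr 1
  have := sq_sqrt hL.le
  field_simp
  rw [this]

lemma IsMinH.lintegral_ann_le {r s : ℝ} {f : ℂ → ℂ} (hf : IsMinH r f) (hr0 : 0 < r)
    (hr1 : r < 1) (hs0 : 0 ≤ s) (hsr : s ≤ r) :
    (ENNReal.ofReal (log (1 / (1 - r ^ 2))))⁻¹ * ∫⁻ z in ann s r, ENNReal.ofReal ‖f z‖ ∂dA
      ≤ ENNReal.ofReal (√(1 - log (1 / (1 - s ^ 2)) / log (1 / (1 - r ^ 2)))) := by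
  have hL := log_one_div_one_sub_sq_pos hr0 hr1
  have hmono : log (1 / (1 - s ^ 2)) ≤ log (1 / (1 - r ^ 2)) :=
    log_le_log (one_div_pos.2 (by nlinarith))
      (one_div_le_one_div_of_le (by nlinarith) (by nlinarith))
  have hann : ann s r ⊆ ball 0 r := sdiff_subset
  have hfc : ContinuousOn f (ann s r) :=
    hf.1.continuousOn.mono (hann.trans (ball_subset_ball hr1.le))
  have hmeas : MeasurableSet (ann s r) := measurableSet_ball.diff measurableSet_closedBall
  calc _ ≤ (ENNReal.ofReal (log (1 / (1 - r ^ 2))))⁻¹ *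
        ((∫⁻ z in ann s r, ENNReal.ofReal ((1 - ‖z‖ ^ 2) * ‖f z‖ ^ 2) ∂dA) ^ (1 / 2 : ℝ) *
          (∫⁻ z in ann s r, ENNReal.ofReal (1 - ‖z‖ ^ 2)⁻¹ ∂dA) ^ (1 / 2 : ℝ)) := by
        gcongr
        exact setLIntegral_le_weighted_cauchySchwarz hmeas
          (fun z hz => one_sub_norm_sq_pos (ball_subset_closedBall (hann hz)) hr1)
          (fun z => norm_nonneg _) (by fun_prop) (hfc.norm.aemeasurable hmeas)
    _ ≤ (ENNReal.ofReal (log (1 / (1 - r ^ 2))))⁻¹ *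
        (ENNReal.ofReal (log (1 / (1 - r ^ 2))) ^ (1 / 2 : ℝ) *
          ENNReal.ofReal (log (1 / (1 - r ^ 2)) - log (1 / (1 - s ^ 2))) ^ (1 / 2 : ℝ)) := by
        rw [lintegral_ann_inv_one_sub_norm_sq hs0 hsr hr1]
        gcongr
        exact (lintegral_mono_set hann).trans (hf.lintegral_weighted_sq_le hr0 hr1)
    _ = _ := by
        rw [ofReal_inv_mul_rpow_half_mul_rpow_half hL (sub_nonneg.2 hmono), sub_div,
          div_self hL.ne']

lemma tendsto_log_one_div_one_sub_sq :
    Tendsto (fun r : ℝ => log (1 / (1 - r ^ 2))) (𝓝[<] 1) atTop := by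
  have h : Tendsto (fun r : ℝ => 1 - r ^ 2) (𝓝[<] 1) (𝓝[>] 0) := by
    refine tendsto_nhdsWithin_iff.2 ⟨?_, ?_⟩
    · simpa using ((by fun_prop : Continuous fun r : ℝ => 1 - r ^ 2).tendsto 1).mono_left
        nhdsWithin_le_nhds
    · filter_upwards [Ioo_mem_nhdsLT zero_lt_one] with r hr
      exact mem_Ioi.2 (by nlinarith [hr.1, hr.2])
  refine (tendsto_neg_atBot_atTop.comp (tendsto_log_nhdsGT_zero.comp h)).congr fun r => ?_
  simp [one_div, log_inv]

lemma tendsto_sqrt_one_sub_log_div_log :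
    Tendsto (fun r : ℝ => √(1 - log (1 / (1 - (r ^ 2) ^ 2)) / log (1 / (1 - r ^ 2))))
      (𝓝[<] 1) (𝓝 0) := by
  have hnum : Tendsto (fun r : ℝ => log (1 + r ^ 2)) (𝓝[<] 1) (𝓝 (log 2)) := by
    have : ContinuousAt (fun r : ℝ => log (1 + r ^ 2)) 1 :=
      (continuousAt_log (by norm_num)).comp (by fun_prop)
    simpa [one_add_one_eq_two] using this.tendsto.mono_left nhdsWithin_le_nhds
  have h := (continuous_sqrt.tendsto 0).comp (hnum.div_atTop tendsto_log_one_div_one_sub_sq)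
  rw [sqrt_zero] at h
  refine h.congr' ?_
  filter_upwards [Ioo_mem_nhdsLT zero_lt_one] with r hr
  have hr2 : 0 < 1 - r ^ 2 := by nlinarith [hr.1, hr.2]
  have hsplit : log (1 / (1 - (r ^ 2) ^ 2)) = log (1 / (1 - r ^ 2)) - log (1 + r ^ 2) := by
    rw [show 1 - (r ^ 2) ^ 2 = (1 - r ^ 2) * (1 + r ^ 2) by ring, one_div, one_div, log_inv,
      log_inv, log_mul hr2.ne' (by positivity)]
    ring
  have hL := log_one_div_one_sub_sq_pos hr.1 hr.2
  rw [Function.comp_apply, hsplit, sub_div, div_self hL.ne', sub_sub_cancel]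

/-- hyperbolic L¹-non-concentration. For `0 < r < 1`, `0 < δ < 1` and
`f` a minimizer of `ρ_{H,r}`,
`(1/log(1/(1-r²))) ∫_{𝔸(r(1-δ),r)} |f| dA ≤ (1 - log(1/(1-r²(1-δ)²))/log(1/(1-r²)))^{1/2}`;
and if for each `r` one takes `δ = 1-r` and `f_r` a minimizer of `ρ_{H,r}`, then
`(1/log(1/(1-r²))) ∫_{𝔸(r(1-δ),r)} |f_r| dA → 0` as `r → 1⁻`. -/
theorem hyperbolic_L1_nonconcentration :
    (∀ r δ : ℝ, ∀ f : ℂ → ℂ, 0 < r → r < 1 → 0 < δ → δ < 1 → IsMinH r f →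
      (ENNReal.ofReal (Real.log (1 / (1 - r ^ 2))))⁻¹ *
          (∫⁻ z in ann (r * (1 - δ)) r, ENNReal.ofReal (‖f z‖) ∂dA)
        ≤ ENNReal.ofReal
            (Real.sqrt (1 - Real.log (1 / (1 - r ^ 2 * (1 - δ) ^ 2))
              / Real.log (1 / (1 - r ^ 2))))) ∧
    (∀ f : ℝ → ℂ → ℂ, (∀ r ∈ Ioo (0:ℝ) 1, IsMinH r (f r)) →
      Tendsto (fun r : ℝ => (ENNReal.ofReal (Real.log (1 / (1 - r ^ 2))))⁻¹ *
          ∫⁻ z in ann (r * (1 - (1 - r))) r, ENNReal.ofReal (‖f r z‖) ∂dA)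
        (𝓝[<] (1:ℝ)) (𝓝 0)) := by
  refine ⟨fun r δ f hr0 hr1 hδ0 hδ1 hf => ?_, fun f hf => ?_⟩
  · simpa only [mul_pow] using hf.lintegral_ann_le hr0 hr1 (mul_nonneg hr0.le (by linarith))
      (mul_le_of_le_one_right hr0.le (by linarith))
  · have hbound := ENNReal.tendsto_ofReal tendsto_sqrt_one_sub_log_div_log
    rw [ENNReal.ofReal_zero] at hbound
    refine tendsto_of_tendsto_of_tendsto_of_le_of_le' tendsto_const_nhds hbound
      (.of_forall fun _ => zero_le) ?_
    filter_upwards [Ioo_mem_nhdsLT zero_lt_one] with r hr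
    rw [sub_sub_cancel, ← sq]
    exact (hf r hr).lintegral_ann_le hr.1 hr.2 (sq_nonneg r) (sq_le hr.1.le hr.2.le)
end
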